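/- arXiv:1206.5929 — 4 statements merged into one kernel-verified Lean document; each statement's English description precedes it below -/
import Mathlib

section
/- There exists a constant D > 0 such that Σ_{n ≤ t} 1/φ(n) = D·log t + O(1) for all real t ≥ 1. -/
/-!
Since `n / φ n = ∏_{p ∣ n} p / (p - 1) = ∑_{d ∣ n} μ(d)² / φ(d)`, the function `1 / φ` is the
Dirichlet convolution of `g(d) = μ(d)² / (d φ(d))` with `1 / n`. Hence
`∑_{n ≤ t} 1 / φ(n) = ∑_{d ≤ t} g(d) H(⌊t / d⌋)` with `H` the harmonic numbers, and
`H(⌊t / d⌋) = log t - log d + O(1)`. From `n ≤ 2 φ(n)²` we get `g(d) = O(d^{-3/2})`, so both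
`∑ g(d)` and `∑ g(d) log d` converge; the tail `∑_{d > t} g(d) log t` is at most
`∑_{d > t} g(d) log d`, so the sum is `(∑ g) log t + O(1)`.
-/

open Finset Real
open scoped ArithmeticFunction.Moebius Nat

namespace Nat

/-- The factor `gcd 2 n` compensates for `p = 2`, the only prime with `p > (p - 1) ^ 2`, and keeps
the bound multiplicative. -/
theorem le_totient_sq_mul_gcd_two (n : ℕ) : n ≤ φ n ^ 2 * Nat.gcd 2 n := by
  induction n using Nat.recOnPosPrimePosCoprime with
  | zero => simp
  | one => simp
  | prime_pow p k hp hk =>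
    have hp_le : p ≤ (p - 1) ^ 2 * Nat.gcd 2 (p ^ k) := by
      rcases hp.eq_two_or_odd with rfl | hodd
      · simp [Nat.gcd_eq_left (dvd_pow_self 2 hk.ne')]
      · have h3 : 3 ≤ p := by have := hp.two_le; omega
        have hgcd : 1 ≤ Nat.gcd 2 (p ^ k) := Nat.gcd_pos_of_pos_left _ two_pos
        obtain ⟨q, rfl⟩ : ∃ q, p = q + 2 := ⟨p - 2, by omega⟩
        calc q + 2 ≤ (q + 1) ^ 2 := by nlinarith
          _ ≤ _ := Nat.le_mul_of_pos_right _ hgcd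
    rw [Nat.totient_prime_pow hp hk]
    calc p ^ k = p ^ (k - 1) * p := by rw [← pow_succ, Nat.sub_add_cancel hk]
      _ ≤ (p ^ (k - 1)) ^ 2 * ((p - 1) ^ 2 * Nat.gcd 2 (p ^ k)) :=
        Nat.mul_le_mul (Nat.le_self_pow two_ne_zero _) hp_le
      _ = _ := by ring
  | coprime a b _ _ hab iha ihb =>
    rw [Nat.totient_mul hab, Nat.Coprime.gcd_mul 2 hab]
    calc a * b ≤ (φ a ^ 2 * Nat.gcd 2 a) * (φ b ^ 2 * Nat.gcd 2 b) := Nat.mul_le_mul iha ihb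
      _ = _ := by ring

theorem le_two_mul_totient_sq (n : ℕ) : n ≤ 2 * φ n ^ 2 :=
  (le_totient_sq_mul_gcd_two n).trans <| by
    rw [mul_comm]; exact Nat.mul_le_mul_right _ (Nat.gcd_le_left _ two_pos)

end Nat

section Convolution

open ArithmeticFunction

noncomputable def invTotient : ArithmeticFunction ℝ := ⟨fun n => (φ n : ℝ)⁻¹, by simp⟩

noncomputable def invNat : ArithmeticFunction ℝ := ⟨fun n => (n : ℝ)⁻¹, by simp⟩

noncomputable def totientWeight : ArithmeticFunction ℝ :=
  ⟨fun n => (μ n : ℝ) ^ 2 / (n * φ n), by simp⟩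

@[simp] theorem invTotient_apply (n : ℕ) : invTotient n = (φ n : ℝ)⁻¹ := rfl

@[simp] theorem invNat_apply (n : ℕ) : invNat n = (n : ℝ)⁻¹ := rfl

@[simp] theorem totientWeight_apply (n : ℕ) :
    totientWeight n = (μ n : ℝ) ^ 2 / (n * φ n) := rfl

theorem isMultiplicative_invTotient : invTotient.IsMultiplicative :=
  IsMultiplicative.iff_ne_zero.mpr
    ⟨by simp, fun _ _ hmn => by simp [Nat.totient_mul hmn, mul_comm]⟩

theorem isMultiplicative_invNat : invNat.IsMultiplicative :=
  IsMultiplicative.iff_ne_zero.mpr ⟨by simp, fun _ _ _ => by simp [mul_comm]⟩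

theorem isMultiplicative_totientWeight : totientWeight.IsMultiplicative :=
  IsMultiplicative.iff_ne_zero.mpr ⟨by simp, fun _ _ hmn => by
    simp only [totientWeight_apply, Nat.totient_mul hmn,
      isMultiplicative_moebius.map_mul_of_coprime hmn]
    push_cast
    ring⟩

theorem totientWeight_mul_invNat : totientWeight * invNat = invTotient := by
  refine (IsMultiplicative.eq_iff_eq_on_prime_powers _
    (isMultiplicative_totientWeight.mul isMultiplicative_invNat) _ isMultiplicative_invTotient).mpr
    fun p k hp => ?_
  rw [mul_apply, Nat.sum_divisorsAntidiagonal (fun d m => totientWeight d * invNat m),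
    Nat.sum_divisors_prime_pow hp]
  rcases k with _ | k
  · simp
  have h_high : ∀ i ∈ range k,
      totientWeight (p ^ (i + 2)) * invNat (p ^ (k + 1) / p ^ (i + 2)) = 0 :=
    fun i _ => by simp [moebius_apply_prime_pow hp]
  have hdiv : p ^ (k + 1) / p ^ (0 + 1) = p ^ k := by
    rw [zero_add, pow_one, pow_succ, Nat.mul_div_cancel _ hp.pos]
  rw [sum_range_succ', sum_range_succ', sum_eq_zero h_high, hdiv, pow_zero, Nat.div_one]
  have key : ((p : ℝ) - 1)⁻¹ * (p : ℝ)⁻¹ * ((p : ℝ) ^ k)⁻¹ + ((p : ℝ) ^ (k + 1))⁻¹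
      = ((p : ℝ) - 1)⁻¹ * ((p : ℝ) ^ k)⁻¹ := by
    have hp0 : (p : ℝ) ≠ 0 := by exact_mod_cast hp.ne_zero
    have hp1 : (p : ℝ) - 1 ≠ 0 := sub_ne_zero.mpr (by exact_mod_cast hp.one_lt.ne')
    field_simp
    ring
  simpa [Nat.totient_prime hp, Nat.totient_prime_pow_succ hp, moebius_apply_prime hp,
    Nat.cast_sub hp.one_le] using key

theorem sum_Icc_inv_totient_eq (N : ℕ) :
    ∑ n ∈ Icc 1 N, (φ n : ℝ)⁻¹ = ∑ d ∈ Icc 1 N, totientWeight d * harmonic (N / d) := by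
  have h := sum_Ioc_mul_eq_sum_sum totientWeight invNat N
  simp only [totientWeight_mul_invNat, invTotient_apply, invNat_apply,
    ← Icc_add_one_left_eq_Ioc, zero_add] at h
  simp only [h, harmonic_eq_sum_Icc, Rat.cast_sum, Rat.cast_inv, Rat.cast_natCast]

end Convolution

theorem totientWeight_nonneg (n : ℕ) : 0 ≤ totientWeight n := by
  rw [totientWeight_apply]; positivity

theorem totientWeight_le_rpow (n : ℕ) : totientWeight n ≤ 2 * (n : ℝ) ^ (-(3 / 2 : ℝ)) := by
  rcases Nat.eq_zero_or_pos n with rfl | hn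
  · simp
  have hn' : (0 : ℝ) < n := by exact_mod_cast hn
  have hφ : (0 : ℝ) < φ n := by exact_mod_cast Nat.totient_pos.mpr hn
  have hμ : (μ n : ℝ) ^ 2 ≤ 1 := by
    rw [← sq_abs]
    exact pow_le_one₀ (abs_nonneg _) (by exact_mod_cast ArithmeticFunction.abs_moebius_le_one)
  have hsqrt : √n ≤ 2 * φ n := (sqrt_le_left (by positivity)).mpr <| by
    have : (n : ℝ) ≤ 2 * φ n ^ 2 := by exact_mod_cast Nat.le_two_mul_totient_sq n
    nlinarith
  have hpow : (n : ℝ) ^ (3 / 2 : ℝ) = n * √n := by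
    rw [sqrt_eq_rpow, ← rpow_one_add' hn'.le (by norm_num)]; norm_num
  rw [totientWeight_apply, rpow_neg hn'.le, hpow, div_le_iff₀ (by positivity)]
  refine hμ.trans ?_
  field_simp
  nlinarith [mul_le_mul_of_nonneg_left hsqrt hn'.le]

theorem summable_totientWeight : Summable totientWeight :=
  Summable.of_nonneg_of_le totientWeight_nonneg totientWeight_le_rpow
    ((summable_nat_rpow.mpr (by norm_num)).mul_left 2)

theorem summable_mul_log_of_le_rpow {f : ℕ → ℝ} {C p : ℝ} (hp : 1 < p) (hf0 : ∀ n, 0 ≤ f n)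
    (hf : ∀ n : ℕ, f n ≤ C * (n : ℝ) ^ (-p)) : Summable fun n => f n * log n := by
  set ε := (p - 1) / 2 with hε
  have hε0 : 0 < ε := by linarith
  refine Summable.of_nonneg_of_le (fun n => mul_nonneg (hf0 n) (log_natCast_nonneg n))
    (fun n => ?_) ((summable_nat_rpow.mpr (by linarith : -p + ε < -1)).mul_left (C / ε))
  calc f n * log n ≤ C * (n : ℝ) ^ (-p) * ((n : ℝ) ^ ε / ε) :=
        mul_le_mul (hf n) (log_le_rpow_div n.cast_nonneg hε0) (log_natCast_nonneg n)
          ((hf0 n).trans (hf n))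
    _ = C / ε * (n : ℝ) ^ (-p + ε) := by
        rw [rpow_add' n.cast_nonneg (by linarith)]
        ring

theorem one_le_tsum_totientWeight : 1 ≤ ∑' d, totientWeight d := by
  simpa using summable_totientWeight.le_tsum 1 fun d _ => totientWeight_nonneg d

theorem abs_harmonic_floor_sub_log_le {y : ℝ} (hy : 1 ≤ y) :
    |(harmonic ⌊y⌋₊ : ℝ) - log y| ≤ 1 :=
  abs_sub_le_iff.mpr ⟨by linarith [harmonic_floor_le_one_add_log y hy],
    by linarith [log_le_harmonic_floor y (by linarith), log_nonneg hy]⟩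

theorem tsum_compl_Icc_floor_mul_log_le {g : ℕ → ℝ} (hg0 : g 0 = 0) (hg : ∀ d, 0 ≤ g d)
    (hsum : Summable g) (hsum_log : Summable fun d => g d * log d) {t : ℝ} (ht : 0 < t) :
    (∑' d : ↑((Icc 1 ⌊t⌋₊ : Finset ℕ) : Set ℕ)ᶜ, g d) * log t
      ≤ ∑' d : ↑((Icc 1 ⌊t⌋₊ : Finset ℕ) : Set ℕ)ᶜ, g d * log d := by
  rw [← tsum_mul_right]
  refine Summable.tsum_le_tsum (fun ⟨d, hd⟩ => ?_) ((hsum.subtype _).mul_right _)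
    (hsum_log.subtype _)
  rcases Nat.eq_zero_or_pos d with rfl | hpos
  · simp [hg0]
  have htd : t < d :=
    (Nat.floor_lt ht.le).mp (by simpa [Nat.one_le_iff_ne_zero, hpos.ne'] using hd)
  exact mul_le_mul_of_nonneg_left (log_le_log ht htd.le) (hg d)

theorem abs_sum_Icc_floor_mul_sub_tsum_mul_log_le {g H : ℕ → ℝ} (hg0 : g 0 = 0)
    (hg : ∀ d, 0 ≤ g d) (hsum : Summable g) (hsum_log : Summable fun d => g d * log d) {t : ℝ}
    (ht : 1 ≤ t) (hH : ∀ d ∈ Icc 1 ⌊t⌋₊, |H d - log (t / d)| ≤ 1) :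
    |∑ d ∈ Icc 1 ⌊t⌋₊, g d * H d - (∑' d, g d) * log t| ≤ ∑' d, g d + ∑' d, g d * log d := by
  set s := Icc 1 ⌊t⌋₊
  have hdiff : |∑ d ∈ s, g d * (H d - log (t / d))| ≤ ∑ d ∈ s, g d := by
    refine (abs_sum_le_sum_abs _ _).trans (sum_le_sum fun d hd => ?_)
    rw [abs_mul, abs_of_nonneg (hg d)]
    exact mul_le_of_le_one_right (hg d) (hH d hd)
  have hsplit : ∑ d ∈ s, g d * H d - (∑ d ∈ s, g d + ∑' d : ↑(s : Set ℕ)ᶜ, g d) * log t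
      = ∑ d ∈ s, g d * (H d - log (t / d))
        - (∑ d ∈ s, g d * log d + (∑' d : ↑(s : Set ℕ)ᶜ, g d) * log t) := by
    rw [add_mul, sum_mul, ← sub_sub, ← sum_sub_distrib, sub_add_eq_sub_sub, ← sum_sub_distrib]
    refine congrArg₂ _ (sum_congr rfl fun d hd => ?_) rfl
    have hd0 : (d : ℝ) ≠ 0 := by exact_mod_cast (Nat.one_le_iff_ne_zero.mp (mem_Icc.mp hd).1)
    rw [log_div (by positivity) hd0]
    ring
  have h_head_log : 0 ≤ ∑ d ∈ s, g d * log d :=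
    sum_nonneg fun d _ => mul_nonneg (hg d) (log_natCast_nonneg d)
  have h_tail : 0 ≤ (∑' d : ↑(s : Set ℕ)ᶜ, g d) * log t :=
    mul_nonneg (tsum_nonneg fun d => hg d) (log_nonneg ht)
  have h_tail_le := tsum_compl_Icc_floor_mul_log_le hg0 hg hsum hsum_log (by linarith : 0 < t)
  have h_tail_log : 0 ≤ ∑' d : ↑(s : Set ℕ)ᶜ, g d * log d :=
    tsum_nonneg fun d => mul_nonneg (hg d) (log_natCast_nonneg d)
  have h_tail_g : 0 ≤ ∑' d : ↑(s : Set ℕ)ᶜ, g d := tsum_nonneg fun d => hg d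
  rw [← hsum.sum_add_tsum_compl (s := s), ← hsum_log.sum_add_tsum_compl (s := s), hsplit]
  rw [abs_le] at hdiff ⊢
  constructor <;> linarith [hdiff.1, hdiff.2]

theorem sum_one_div_totient_asymptotic :
    ∃ D > (0 : ℝ), ∃ c : ℝ, ∀ t : ℝ, 1 ≤ t →
      |(∑ n ∈ Finset.Icc 1 ⌊t⌋₊, (1 : ℝ) / (Nat.totient n)) - D * Real.log t| ≤ c := by
  refine ⟨∑' d, totientWeight d, one_pos.trans_le one_le_tsum_totientWeight,
    ∑' d, totientWeight d + ∑' d, totientWeight d * log d, fun t ht => ?_⟩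
  simp only [one_div, sum_Icc_inv_totient_eq]
  refine abs_sum_Icc_floor_mul_sub_tsum_mul_log_le (by simp) totientWeight_nonneg
    summable_totientWeight (summable_mul_log_of_le_rpow (by norm_num) totientWeight_nonneg
      totientWeight_le_rpow) ht fun d hd => ?_
  have hd0 : 0 < d := (mem_Icc.mp hd).1
  have hdt : (d : ℝ) ≤ t :=
    (Nat.cast_le.mpr (mem_Icc.mp hd).2).trans (Nat.floor_le (by linarith))
  rw [← Nat.floor_div_natCast]
  exact abs_harmonic_floor_sub_log_le ((one_le_div (by exact_mod_cast hd0)).mpr hdt)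
end

section
/- For y ≥ 1, one has Σ_{n > y} 1/φ(n)² = O(1/y), i.e., there is an absolute constant c with Σ_{n > y} 1/φ(n)² ≤ c/y for all y ≥ 1. -/
/-!
Euler's product gives `(n / φ n)² = ∏_{p ∣ n} (1 - 1/p)⁻² ≤ ∏_{p ∣ n} (1 + 6/p)`, which expands as
`∑_{t ⊆ primeFactors n} ∏_{p ∈ t} 6/p`. Exchanging the sums, a set `t` of primes with product `d`
contributes `(∏_{p ∈ t} 6/p) · ∑_{d ∣ n, n > y} 1/n² ≤ (2/y) ∏_{p ∈ t} 6/p²`, and summing over all `t`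
gives at most `(2/y) ∏_p (1 + 6/p²) ≤ (2/y) exp (6 ∑_p 1/p²) ≤ 2 e¹² / y`.
-/

open Finset Real

theorem sum_inv_sq_le_two_div {t : ℝ} (ht : 0 < t) {s : Finset ℕ} (hs : ∀ m ∈ s, t < m) :
    ∑ m ∈ s, ((m : ℝ) ^ 2)⁻¹ ≤ 2 / t := by
  have hsub : s ⊆ Ioo ⌊t⌋₊ (s.sup id + 1) := fun m hm =>
    mem_Ioo.2 ⟨(Nat.floor_lt ht.le).2 (hs m hm), Nat.lt_succ_of_le (le_sup (f := id) hm)⟩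
  calc ∑ m ∈ s, ((m : ℝ) ^ 2)⁻¹ ≤ ∑ m ∈ Ioo ⌊t⌋₊ (s.sup id + 1), ((m : ℝ) ^ 2)⁻¹ :=
        sum_le_sum_of_subset_of_nonneg hsub fun _ _ _ => by positivity
    _ ≤ 2 / (⌊t⌋₊ + 1) := sum_Ioo_inv_sq_le _ _
    _ ≤ 2 / t := div_le_div_of_nonneg_left zero_le_two ht (Nat.lt_floor_add_one t).le

theorem sum_inv_sq_le_of_dvd {d : ℕ} (hd : 0 < d) {y : ℝ} (hy : 0 < y) {s : Finset ℕ}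
    (hs : ∀ n ∈ s, d ∣ n ∧ y < n) : ∑ n ∈ s, ((n : ℝ) ^ 2)⁻¹ ≤ 2 / (d * y) := by
  have hdR : (0 : ℝ) < d := by exact_mod_cast hd
  have hinj : Set.InjOn (· / d) s := fun a ha b hb hab =>
    (Nat.div_left_inj (hs a ha).1 (hs b hb).1).1 hab
  calc ∑ n ∈ s, ((n : ℝ) ^ 2)⁻¹ = ((d : ℝ) ^ 2)⁻¹ * ∑ m ∈ s.image (· / d), ((m : ℝ) ^ 2)⁻¹ := by
        rw [sum_image hinj, mul_sum]
        refine sum_congr rfl fun n hn => ?_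
        obtain ⟨k, rfl⟩ := (hs n hn).1
        rw [Nat.mul_div_cancel_left k hd]
        push_cast
        ring
    _ ≤ ((d : ℝ) ^ 2)⁻¹ * (2 / (y / d)) := by
        gcongr
        refine sum_inv_sq_le_two_div (by positivity) ?_
        simp only [mem_image]
        rintro _ ⟨n, hn, rfl⟩
        obtain ⟨⟨k, rfl⟩, hyn⟩ := hs n hn
        rw [Nat.mul_div_cancel_left k hd, div_lt_iff₀ hdR]
        push_cast at hyn
        linarith
    _ = 2 / (d * y) := by field_simp

-- Equality at `x = 2`, so `6` cannot be lowered.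
theorem inv_sq_one_sub_inv_le {x : ℝ} (hx : 2 ≤ x) : ((1 - x⁻¹) ^ 2)⁻¹ ≤ 1 + 6 / x := by
  have hx0 : 0 < x := by linarith
  have h : 1 - x⁻¹ = (x - 1) / x := by field_simp
  rw [h, div_pow, inv_div, div_le_iff₀ (by nlinarith)]
  field_simp
  nlinarith

theorem one_div_totient_sq_le {n : ℕ} (hn : n ≠ 0) :
    1 / (Nat.totient n : ℝ) ^ 2 ≤
      1 / (n : ℝ) ^ 2 * ∑ t ∈ n.primeFactors.powerset, ∏ p ∈ t, 6 / (p : ℝ) := by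
  have hφ : (Nat.totient n : ℝ) = n * ∏ p ∈ n.primeFactors, (1 - (p : ℝ)⁻¹) := by
    have h := congrArg (Rat.cast (K := ℝ)) (Nat.totient_eq_mul_prod_factors n)
    push_cast at h
    exact h
  rw [← prod_one_add, hφ, mul_pow, ← prod_pow, one_div, mul_inv, ← prod_inv_distrib, one_div]
  gcongr with p hp
  exact inv_sq_one_sub_inv_le (by exact_mod_cast (Nat.prime_of_mem_primeFactors hp).two_le)

theorem sum_powerset_prod_six_div_sq_le {P : Finset ℕ} (hP : ∀ p ∈ P, 1 < p) :
    ∑ t ∈ P.powerset, ∏ p ∈ t, 6 / (p : ℝ) ^ 2 ≤ exp 12 := by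
  rw [← prod_one_add]
  calc _ ≤ exp (∑ p ∈ P, 6 / (p : ℝ) ^ 2) := prod_one_add_le_exp_sum _ fun _ => by positivity
    _ ≤ exp 12 := by
      have := sum_inv_sq_le_two_div one_pos (s := P) fun p hp => by exact_mod_cast hP p hp
      simp_rw [div_eq_mul_inv, ← mul_sum]
      gcongr
      linarith

theorem sum_filter_primeFactors_superset_le {y : ℝ} (hy : 0 < y) {s : Finset ℕ}
    (hs : ∀ n ∈ s, y < n) {t : Finset ℕ} (ht : ∀ p ∈ t, p.Prime) :
    ∑ n ∈ s.filter (t ⊆ ·.primeFactors), 1 / (n : ℝ) ^ 2 * ∏ p ∈ t, 6 / (p : ℝ) ≤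
      2 / y * ∏ p ∈ t, 6 / (p : ℝ) ^ 2 := by
  have hd : 0 < ∏ p ∈ t, p := prod_pos fun p hp => (ht p hp).pos
  have hmult := sum_inv_sq_le_of_dvd hd hy (s := s.filter (t ⊆ ·.primeFactors)) fun n hn => by
    rw [mem_filter] at hn
    exact ⟨(prod_dvd_prod_of_subset _ _ id hn.2).trans (Nat.prod_primeFactors_dvd n), hs n hn.1⟩
  calc _ = (∑ n ∈ s.filter (t ⊆ ·.primeFactors), ((n : ℝ) ^ 2)⁻¹) * ∏ p ∈ t, 6 / (p : ℝ) := by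
        simp only [one_div, sum_mul]
    _ ≤ 2 / ((∏ p ∈ t, p : ℕ) * y) * ∏ p ∈ t, 6 / (p : ℝ) := by gcongr
    _ = 2 / y * ∏ p ∈ t, 6 / (p : ℝ) ^ 2 := by
        simp only [sq, ← div_div, prod_div_distrib (f := fun p : ℕ => 6 / (p : ℝ)), Nat.cast_prod]
        ring

theorem sum_one_div_totient_sq_le {y : ℝ} (hy : 0 < y) {s : Finset ℕ} (hs : ∀ n ∈ s, y < n) :
    ∑ n ∈ s, 1 / (Nat.totient n : ℝ) ^ 2 ≤ 2 * exp 12 / y := by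
  set P := s.biUnion Nat.primeFactors
  have hP : ∀ p ∈ P, p.Prime := by
    simp only [P, mem_biUnion]
    rintro p ⟨n, -, hp⟩
    exact Nat.prime_of_mem_primeFactors hp
  have hswap : ∑ n ∈ s, ∑ t ∈ n.primeFactors.powerset, 1 / (n : ℝ) ^ 2 * ∏ p ∈ t, 6 / (p : ℝ) =
      ∑ t ∈ P.powerset, ∑ n ∈ s.filter (t ⊆ ·.primeFactors), 1 / (n : ℝ) ^ 2 * ∏ p ∈ t, 6 / (p : ℝ) :=
    sum_comm' fun n t => by
      simp only [mem_powerset, mem_filter, P]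
      exact ⟨fun ⟨hn, ht⟩ => ⟨⟨hn, ht⟩, ht.trans (subset_biUnion_of_mem _ hn)⟩, fun h => h.1⟩
  calc ∑ n ∈ s, 1 / (Nat.totient n : ℝ) ^ 2
      ≤ ∑ n ∈ s, ∑ t ∈ n.primeFactors.powerset, 1 / (n : ℝ) ^ 2 * ∏ p ∈ t, 6 / (p : ℝ) := by
        refine sum_le_sum fun n hn => ?_
        rw [← mul_sum]
        refine one_div_totient_sq_le ?_
        rintro rfl
        exact absurd (hs 0 hn) (by simpa using hy.le)
    _ = _ := hswap
    _ ≤ ∑ t ∈ P.powerset, 2 / y * ∏ p ∈ t, 6 / (p : ℝ) ^ 2 := sum_le_sum fun t ht =>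
        sum_filter_primeFactors_superset_le hy hs fun p hp => hP p (mem_powerset.1 ht hp)
    _ ≤ 2 / y * exp 12 := by
        rw [← mul_sum]
        gcongr
        exact sum_powerset_prod_six_div_sq_le fun p hp => (hP p hp).one_lt
    _ = 2 * exp 12 / y := by ring

theorem tail_sum_one_div_totient_sq :
    ∃ c : ℝ, ∀ y : ℝ, 1 ≤ y →
      (∑' n : ℕ, if y < (n : ℝ) then (1 : ℝ) / (Nat.totient n) ^ 2 else 0) ≤ c / y := by
  refine ⟨2 * exp 12, fun y hy => tsum_le_of_sum_le' (by positivity) fun s => ?_⟩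
  rw [← sum_filter]
  exact sum_one_div_totient_sq_le (by linarith) fun n hn => (mem_filter.1 hn).2
end

section
/- Let n_k (k ≥ 1) be positive reals with n_k ≥ φ(k)², where φ is Euler's totient. Then the series Σ_{k=1}^∞ (1/n_k)·Σ_{dm=k} μ(d)/m converges absolutely, and for y ≥ 1 the tail satisfies |Σ_{k > y} (1/n_k)·Σ_{dm=k} μ(d)/m| = O(1/y). -/
/-!
Writing `k = d m`, the inner sum is `k⁻¹ ∑_{d ∣ k} μ(d) d = k⁻¹ ∏_{p ∣ k} (1 - p)`, of absolute
value at most `φ(k) / k`, so the `k`-th term is at most `1 / (k φ(k))`. To control the tails of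
`∑ 1 / (k φ(k))`, expand `k / φ(k) = ∑_{d ∣ k} μ(d)² / φ(d)` and swap the order of summation:
`∑_{k > y} 1 / (k φ(k)) ≤ ∑_d μ(d)² / (φ(d) d²) ∑_{m > y / d} 1 / m²`, which is at most
`(2 / y) ∑_d μ(d)² / (d φ(d))`.
The last series converges because `d ≤ 2 φ(d)²` for squarefree `d`.
-/

open ArithmeticFunction Finset
open scoped Nat ArithmeticFunction.zeta

namespace ArithmeticFunction

def totient : ArithmeticFunction ℕ := ⟨φ, Nat.totient_zero⟩

theorem totient_apply (n : ℕ) : totient n = φ n := rfl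

theorem isMultiplicative_totient : IsMultiplicative totient :=
  ⟨Nat.totient_one, Nat.totient_mul⟩

theorem sum_divisors_prime_pow_moebius_mul {R : Type*} [CommRing R] {p : ℕ} (hp : p.Prime)
    {i : ℕ} (hi : i ≠ 0) (g : ℕ → R) :
    ∑ d ∈ (p ^ i).divisors, (moebius d : R) * g d = g 1 - g p := by
  obtain ⟨i, rfl⟩ := Nat.exists_eq_succ_of_ne_zero hi
  have hvanish : ∀ j ∈ range i, (moebius (p ^ (j + 1 + 1)) : R) * g (p ^ (j + 1 + 1)) = 0 :=
    fun j _ => by simp [moebius_apply_prime_pow hp]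
  rw [Nat.sum_divisors_prime_pow hp, sum_range_succ', sum_range_succ', sum_eq_zero hvanish]
  simp only [zero_add, pow_zero, pow_one, moebius_apply_one, moebius_apply_prime hp]
  push_cast
  ring

theorem IsMultiplicative.abs_le_of_abs_le_prime_pow {R : Type*} [CommRing R] [LinearOrder R]
    [IsStrictOrderedRing R] {f g : ArithmeticFunction R}
    (hf : f.IsMultiplicative) (hg : g.IsMultiplicative)
    (hfg : ∀ p i, p.Prime → i ≠ 0 → |f (p ^ i)| ≤ g (p ^ i)) {n : ℕ} (hn : n ≠ 0) :
    |f n| ≤ g n := by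
  rw [hf.multiplicative_factorization f hn, hg.multiplicative_factorization g hn,
    Finsupp.prod, Finsupp.prod, abs_prod]
  exact prod_le_prod (fun _ _ => abs_nonneg _) fun p hp =>
    hfg p _ (Nat.prime_of_mem_primeFactors (by simpa using hp)) (Finsupp.mem_support_iff.1 hp)

end ArithmeticFunction

theorem abs_sum_divisors_moebius_mul_self_le_totient {k : ℕ} (hk : k ≠ 0) :
    |∑ d ∈ k.divisors, (moebius d : ℝ) * d| ≤ φ k := by
  have hmult : IsMultiplicative
      (pmul (moebius : ArithmeticFunction ℝ) (ArithmeticFunction.id : ArithmeticFunction ℝ) *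
        (ζ : ArithmeticFunction ℝ)) :=
    (isMultiplicative_moebius.intCast.pmul isMultiplicative_id.natCast).mul
      isMultiplicative_zeta.natCast
  have := hmult.abs_le_of_abs_le_prime_pow isMultiplicative_totient.natCast ?_ hk
  · simpa only [coe_mul_zeta_apply, pmul_apply, intCoe_apply, natCoe_apply, id_apply,
      totient_apply] using this
  intro p i hp hi
  have hp1 : (1 : ℝ) ≤ p := by exact_mod_cast hp.one_lt.le
  have htot : φ p ≤ φ (p ^ i) :=
    Nat.le_of_dvd (Nat.totient_pos.2 (pow_pos hp.pos _))
      (Nat.totient_dvd_of_dvd (dvd_pow_self p hi))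
  simp only [coe_mul_zeta_apply, pmul_apply, intCoe_apply, natCoe_apply, id_apply, totient_apply]
  rw [sum_divisors_prime_pow_moebius_mul hp hi, abs_sub_comm, Nat.cast_one,
    abs_of_nonneg (by linarith)]
  calc (p : ℝ) - 1 = φ p := by rw [Nat.totient_prime hp, Nat.cast_pred hp.pos]
    _ ≤ φ (p ^ i) := by exact_mod_cast htot

noncomputable def moebiusSqDivTotient : ArithmeticFunction ℝ :=
  pdiv (pmul (moebius : ArithmeticFunction ℝ) (moebius : ArithmeticFunction ℝ)) totient

theorem moebiusSqDivTotient_apply (n : ℕ) :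
    moebiusSqDivTotient n = (moebius n : ℝ) * (moebius n / φ n) := by
  simp [moebiusSqDivTotient, pdiv_apply, pmul_apply, totient_apply, mul_div_assoc]

theorem moebiusSqDivTotient_nonneg (n : ℕ) : 0 ≤ moebiusSqDivTotient n := by
  rw [moebiusSqDivTotient_apply, ← mul_div_assoc]
  exact div_nonneg (mul_self_nonneg _) (Nat.cast_nonneg _)

theorem div_totient_le_sum_divisors_moebiusSqDivTotient {k : ℕ} (hk : k ≠ 0) :
    (k : ℝ) / φ k ≤ ∑ d ∈ k.divisors, moebiusSqDivTotient d := by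
  have hmult : IsMultiplicative (pdiv (ArithmeticFunction.id : ArithmeticFunction ℝ) totient) :=
    isMultiplicative_id.natCast.pdiv isMultiplicative_totient.natCast
  have hw : IsMultiplicative moebiusSqDivTotient :=
    (isMultiplicative_moebius.intCast.pmul isMultiplicative_moebius.intCast).pdiv
      isMultiplicative_totient.natCast
  have := hmult.abs_le_of_abs_le_prime_pow (hw.mul isMultiplicative_zeta.natCast) ?_ hk
  · simp only [coe_mul_zeta_apply, pdiv_apply, natCoe_apply, id_apply, totient_apply] at this
    exact (le_abs_self _).trans this
  intro p i hp hi
  have hp1 : (0 : ℝ) < p - 1 := by linarith [show (1 : ℝ) < p by exact_mod_cast hp.one_lt]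
  obtain ⟨i, rfl⟩ := Nat.exists_eq_succ_of_ne_zero hi
  simp only [coe_mul_zeta_apply, moebiusSqDivTotient_apply, pdiv_apply, natCoe_apply, id_apply,
    totient_apply]
  rw [sum_divisors_prime_pow_moebius_mul hp hi, moebius_apply_one, moebius_apply_prime hp,
    Nat.totient_one, Nat.totient_prime hp, Nat.totient_prime_pow_succ hp]
  push_cast [Nat.cast_pred hp.pos]
  have hp0 : (0 : ℝ) < p := by exact_mod_cast hp.pos
  rw [abs_of_pos (div_pos (pow_pos hp0 _) (mul_pos (pow_pos hp0 _) hp1)), pow_succ]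
  apply le_of_eq
  field_simp
  ring

theorem Nat.Prime.le_sub_one_sq {p : ℕ} (hp : p.Prime) (hp2 : p ≠ 2) : p ≤ (p - 1) ^ 2 := by
  obtain ⟨q, rfl⟩ : ∃ q, p = q + 3 := ⟨p - 3, by have := hp.two_le; omega⟩
  rw [show q + 3 - 1 = q + 2 by omega]
  nlinarith

theorem le_two_mul_totient_sq_of_squarefree {d : ℕ} (hd : Squarefree d) : d ≤ 2 * φ d ^ 2 := by
  have hprod : ∏ p ∈ d.primeFactors, p = d := Nat.prod_primeFactors_of_squarefree hd
  have htot : φ d = ∏ p ∈ d.primeFactors, (p - 1) := by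
    rw [Nat.totient_eq_div_primeFactors_mul, hprod, Nat.div_self (Nat.pos_of_ne_zero hd.ne_zero),
      one_mul]
  have hodd : ∀ s ⊆ d.primeFactors, 2 ∉ s → ∏ p ∈ s, p ≤ ∏ p ∈ s, (p - 1) ^ 2 :=
    fun s hs h2 => prod_le_prod' fun p hp =>
      (Nat.prime_of_mem_primeFactors (hs hp)).le_sub_one_sq (ne_of_mem_of_not_mem hp h2)
  rw [htot, ← prod_pow]
  nth_rewrite 1 [← hprod]
  by_cases h2 : 2 ∈ d.primeFactors
  · rw [← mul_prod_erase _ _ h2, ← mul_prod_erase _ (fun p => (p - 1) ^ 2) h2]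
    rw [show (2 - 1) ^ 2 = 1 from rfl, one_mul]
    exact Nat.mul_le_mul_left 2 (hodd _ (erase_subset 2 _) (notMem_erase 2 _))
  · exact (hodd _ subset_rfl h2).trans (Nat.le_mul_of_pos_left _ two_pos)

theorem moebiusSqDivTotient_div_le (d : ℕ) :
    moebiusSqDivTotient d / d ≤ √2 * ((d : ℝ) ^ (3 / 2 : ℝ))⁻¹ := by
  rcases eq_or_ne (moebius d) 0 with hμ | hμ
  · simp only [moebiusSqDivTotient_apply, hμ, Int.cast_zero, zero_mul, zero_div]
    positivity
  have hd : Squarefree d := moebius_ne_zero_iff_squarefree.1 hμ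
  have hμsq : (moebius d : ℝ) * moebius d = 1 := by
    rcases moebius_ne_zero_iff_eq_or.1 hμ with h | h <;> simp [h]
  have hdpos : (0 : ℝ) < d := by exact_mod_cast Nat.pos_of_ne_zero hd.ne_zero
  have hφpos : (0 : ℝ) < φ d := by exact_mod_cast Nat.totient_pos.2 (Nat.pos_of_ne_zero hd.ne_zero)
  have hsqrt : √d ≤ √2 * φ d := by
    rw [← Real.sqrt_sq hφpos.le, ← Real.sqrt_mul zero_le_two]
    exact Real.sqrt_le_sqrt (by exact_mod_cast le_two_mul_totient_sq_of_squarefree hd)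
  have hpow : (d : ℝ) ^ (3 / 2 : ℝ) = d * √d := by
    rw [Real.sqrt_eq_rpow, ← Real.rpow_one_add' hdpos.le (by norm_num)]
    norm_num
  rw [moebiusSqDivTotient_apply, ← mul_div_assoc, hμsq, hpow]
  have hsqrtpos : 0 < √(d : ℝ) := Real.sqrt_pos.2 hdpos
  rw [div_div, ← div_eq_mul_inv, div_le_div_iff₀ (by positivity) (by positivity)]
  nlinarith

theorem summable_moebiusSqDivTotient_div : Summable fun d : ℕ => moebiusSqDivTotient d / d :=
  ((Real.summable_nat_rpow_inv.2 (by norm_num : (1 : ℝ) < 3 / 2)).mul_left √2).of_nonneg_of_le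
    (fun d => div_nonneg (moebiusSqDivTotient_nonneg d) d.cast_nonneg) moebiusSqDivTotient_div_le

theorem sum_filter_inv_sq_le {y : ℝ} (hy : 0 < y) (d : ℕ) (M : Finset ℕ) :
    ∑ m ∈ M with y < (d * m : ℕ), ((m : ℝ) ^ 2)⁻¹ ≤ 2 * d / y := by
  rcases Nat.eq_zero_or_pos d with rfl | hd
  · simp [hy.not_gt]
  have hd' : (0 : ℝ) < d := by exact_mod_cast hd
  set k := ⌊y / d⌋₊
  have hsub : {m ∈ M | y < (d * m : ℕ)} ⊆ Ioo k (M.sup id + 1) := by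
    intro m hm
    rw [mem_filter] at hm
    rw [mem_Ioo, Nat.floor_lt (by positivity), div_lt_iff₀ hd', mul_comm, ← Nat.cast_mul]
    exact ⟨hm.2, Nat.lt_succ_of_le (le_sup (f := id) hm.1)⟩
  have hk : y < d * (k + 1) := by
    have := Nat.lt_floor_add_one (y / d)
    rwa [div_lt_iff₀ hd', mul_comm] at this
  calc _ ≤ ∑ m ∈ Ioo k (M.sup id + 1), ((m : ℝ) ^ 2)⁻¹ :=
        sum_le_sum_of_subset_of_nonneg hsub fun _ _ _ => by positivity
    _ ≤ 2 / (k + 1) := sum_Ioo_inv_sq_le _ _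
    _ ≤ 2 * d / y := by
        rw [div_le_div_iff₀ (by positivity) hy]
        nlinarith

theorem sum_filter_div_mul_sq_le {y : ℝ} (hy : 0 < y) {f : ℕ → ℝ} (hf : ∀ d, 0 ≤ f d)
    (R : Finset ℕ) :
    ∑ p ∈ R ×ˢ R with y < (p.1 * p.2 : ℕ), f p.1 / ((p.1 : ℝ) * p.2) ^ 2 ≤
      2 / y * ∑ d ∈ R, f d / d := by
  calc ∑ p ∈ R ×ˢ R with y < (p.1 * p.2 : ℕ), f p.1 / ((p.1 : ℝ) * p.2) ^ 2
      = ∑ d ∈ R, f d / d ^ 2 * ∑ m ∈ R with y < (d * m : ℕ), ((m : ℝ) ^ 2)⁻¹ := by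
        rw [sum_finset_product _ R fun d => R.filter fun m => y < (d * m : ℕ)]
        · refine sum_congr rfl fun d _ => ?_
          rw [mul_sum]
          refine sum_congr rfl fun m _ => ?_
          simp only [mul_pow, div_eq_mul_inv, mul_inv, mul_assoc]
        · simp [and_assoc]
    _ ≤ ∑ d ∈ R, f d / d ^ 2 * (2 * d / y) := by
        gcongr with d
        · exact div_nonneg (hf d) (sq_nonneg _)
        · exact sum_filter_inv_sq_le hy d R
    _ = 2 / y * ∑ d ∈ R, f d / d := by
        rw [mul_sum]
        refine sum_congr rfl fun d _ => ?_
        rcases eq_or_ne d 0 with rfl | hd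
        · simp
        · field_simp

theorem inv_mul_totient_le_sum_divisorsAntidiagonal (k : ℕ) :
    ((k : ℝ) * φ k)⁻¹ ≤
      ∑ p ∈ k.divisorsAntidiagonal, moebiusSqDivTotient p.1 / ((p.1 : ℝ) * p.2) ^ 2 := by
  rcases eq_or_ne k 0 with rfl | hk
  · simp
  have hk' : (0 : ℝ) < k := by positivity
  have hφ : (0 : ℝ) < φ k := by exact_mod_cast Nat.totient_pos.2 (Nat.pos_of_ne_zero hk)
  have hrw : ∑ p ∈ k.divisorsAntidiagonal, moebiusSqDivTotient p.1 / ((p.1 : ℝ) * p.2) ^ 2 =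
      (∑ d ∈ k.divisors, moebiusSqDivTotient d) / (k : ℝ) ^ 2 := by
    rw [← Nat.sum_divisorsAntidiagonal (fun d _ => moebiusSqDivTotient d), sum_div]
    refine sum_congr rfl fun p hp => ?_
    rw [← Nat.cast_mul, (Nat.mem_divisorsAntidiagonal.1 hp).1]
  rw [hrw, le_div_iff₀ (by positivity)]
  calc ((k : ℝ) * φ k)⁻¹ * k ^ 2 = k / φ k := by field_simp
    _ ≤ _ := div_totient_le_sum_divisors_moebiusSqDivTotient hk

theorem sum_sum_divisorsAntidiagonal_le {M : Type*} [AddCommMonoid M] [PartialOrder M]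
    [IsOrderedAddMonoid M] (S : Finset ℕ) (T : Finset (ℕ × ℕ)) {F : ℕ × ℕ → M}
    (hF : ∀ p ∈ T, 0 ≤ F p) (hST : ∀ k ∈ S, k.divisorsAntidiagonal ⊆ T) :
    ∑ k ∈ S, ∑ p ∈ k.divisorsAntidiagonal, F p ≤ ∑ p ∈ T, F p := by
  have hdisj : (S : Set ℕ).PairwiseDisjoint Nat.divisorsAntidiagonal :=
    fun a _ b _ hab => disjoint_left.2 fun p ha hb =>
      hab ((Nat.mem_divisorsAntidiagonal.1 ha).1.symm.trans (Nat.mem_divisorsAntidiagonal.1 hb).1)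
  rw [← sum_biUnion hdisj]
  exact sum_le_sum_of_subset_of_nonneg (biUnion_subset.2 hST) fun p hp _ => hF p hp

theorem sum_filter_inv_mul_totient_le {y : ℝ} (hy : 0 < y) (S : Finset ℕ) :
    ∑ k ∈ S with y < (k : ℕ), ((k : ℝ) * φ k)⁻¹ ≤
      2 * (∑' d : ℕ, moebiusSqDivTotient d / d) / y := by
  set R := range (S.sup id + 1)
  set F : ℕ × ℕ → ℝ := fun p => moebiusSqDivTotient p.1 / ((p.1 : ℝ) * p.2) ^ 2
  have hsub : ∀ k ∈ {k ∈ S | y < (k : ℕ)},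
      k.divisorsAntidiagonal ⊆ (R ×ˢ R).filter fun p => y < (p.1 * p.2 : ℕ) := by
    intro k hk p hp
    obtain ⟨hkS, hyk⟩ := mem_filter.1 hk
    obtain ⟨hpk, -⟩ := Nat.mem_divisorsAntidiagonal.1 hp
    have hkR : k < S.sup id + 1 := Nat.lt_succ_of_le (le_sup (f := id) hkS)
    have h1 : p.1 ≤ k := Nat.divisor_le (Nat.fst_mem_divisors_of_mem_antidiagonal hp)
    have h2 : p.2 ≤ k := Nat.divisor_le (Nat.snd_mem_divisors_of_mem_antidiagonal hp)
    simp only [mem_filter, mem_product, mem_range, hpk, R]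
    exact ⟨⟨by omega, by omega⟩, hyk⟩
  calc ∑ k ∈ S with y < (k : ℕ), ((k : ℝ) * φ k)⁻¹
      ≤ ∑ k ∈ S with y < (k : ℕ), ∑ p ∈ k.divisorsAntidiagonal, F p :=
        sum_le_sum fun k _ => inv_mul_totient_le_sum_divisorsAntidiagonal k
    _ ≤ ∑ p ∈ R ×ˢ R with y < (p.1 * p.2 : ℕ), F p :=
        sum_sum_divisorsAntidiagonal_le _ _
          (fun p _ => div_nonneg (moebiusSqDivTotient_nonneg _) (sq_nonneg _)) hsub
    _ ≤ 2 / y * ∑ d ∈ R, moebiusSqDivTotient d / d :=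
        sum_filter_div_mul_sq_le hy moebiusSqDivTotient_nonneg R
    _ ≤ 2 / y * ∑' d : ℕ, moebiusSqDivTotient d / d := by
        gcongr
        exact summable_moebiusSqDivTotient_div.sum_le_tsum _
          fun d _ => div_nonneg (moebiusSqDivTotient_nonneg d) d.cast_nonneg
    _ = _ := by ring

theorem summable_inv_mul_totient : Summable fun k : ℕ => ((k : ℝ) * φ k)⁻¹ := by
  refine summable_of_sum_le (c := 2 * (∑' d : ℕ, moebiusSqDivTotient d / d) / (1 / 2))
    (fun k => by positivity) fun S => ?_
  rw [← sum_filter_of_ne (p := fun k : ℕ => (1 / 2 : ℝ) < k)]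
  · exact sum_filter_inv_mul_totient_le one_half_pos S
  intro k _ hk
  have : k ≠ 0 := by rintro rfl; simp at hk
  have : (1 : ℝ) ≤ k := by exact_mod_cast Nat.one_le_iff_ne_zero.2 this
  linarith

theorem abs_sum_divisorsAntidiagonal_moebius_div_le (k : ℕ) :
    |∑ p ∈ k.divisorsAntidiagonal, (moebius p.1 : ℝ) / p.2| ≤ φ k / k := by
  rcases eq_or_ne k 0 with rfl | hk
  · simp
  have hrw : ∑ p ∈ k.divisorsAntidiagonal, (moebius p.1 : ℝ) / p.2 =
      (∑ d ∈ k.divisors, (moebius d : ℝ) * d) / k := by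
    rw [← Nat.sum_divisorsAntidiagonal (fun d _ => (moebius d : ℝ) * d), sum_div]
    refine sum_congr rfl fun p hp => ?_
    obtain ⟨hpk, -⟩ := Nat.mem_divisorsAntidiagonal.1 hp
    have hp1 : (p.1 : ℝ) ≠ 0 := Nat.cast_ne_zero.2 (left_ne_zero_of_mul (hpk ▸ hk))
    rw [← hpk, Nat.cast_mul]
    field_simp
  rw [hrw, abs_div, Nat.abs_cast]
  gcongr
  exact abs_sum_divisors_moebius_mul_self_le_totient hk

theorem abs_one_div_mul_sum_moebius_div_le {k : ℕ} {N : ℝ} (hN : (φ k : ℝ) ^ 2 ≤ N) :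
    |1 / N * ∑ p ∈ k.divisorsAntidiagonal, (moebius p.1 : ℝ) / p.2| ≤ ((k : ℝ) * φ k)⁻¹ := by
  rcases eq_or_ne k 0 with rfl | hk
  · simp
  have hφ : (0 : ℝ) < φ k := by exact_mod_cast Nat.totient_pos.2 (Nat.pos_of_ne_zero hk)
  have hN0 : 0 < N := lt_of_lt_of_le (by positivity) hN
  rw [abs_mul, abs_of_pos (one_div_pos.2 hN0)]
  calc 1 / N * |∑ p ∈ k.divisorsAntidiagonal, (moebius p.1 : ℝ) / p.2|
      ≤ 1 / (φ k : ℝ) ^ 2 * (φ k / k) := by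
        gcongr
        exact abs_sum_divisorsAntidiagonal_moebius_div_le k
    _ = ((k : ℝ) * φ k)⁻¹ := by field_simp

theorem series_and_tail_bound :
    ∃ c > (0 : ℝ), ∀ n : ℕ → ℝ, (∀ k, 0 < n k) →
      (∀ k, 1 ≤ k → ((Nat.totient k : ℝ)) ^ 2 ≤ n k) →
      Summable (fun k : ℕ =>
        |(1 / n k) * ∑ p ∈ k.divisorsAntidiagonal, (moebius p.1 : ℝ) / p.2|) ∧
      ∀ y : ℝ, 1 ≤ y →
        |∑' k : ℕ, (if y < (k : ℝ) then
            (1 / n k) * ∑ p ∈ k.divisorsAntidiagonal, (moebius p.1 : ℝ) / p.2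
          else 0)| ≤ c / y := by
  set K := ∑' d : ℕ, moebiusSqDivTotient d / d
  have hK : 0 < K := summable_moebiusSqDivTotient_div.tsum_pos
    (fun d => div_nonneg (moebiusSqDivTotient_nonneg d) d.cast_nonneg) 1
    (by simp [moebiusSqDivTotient_apply])
  refine ⟨2 * K, by positivity, fun n hpos hn => ?_⟩
  have hterm (k : ℕ) : |1 / n k * ∑ p ∈ k.divisorsAntidiagonal, (moebius p.1 : ℝ) / p.2| ≤
      ((k : ℝ) * φ k)⁻¹ := by
    refine abs_one_div_mul_sum_moebius_div_le ?_
    rcases Nat.eq_zero_or_pos k with rfl | hk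
    · simpa using (hpos 0).le
    · exact hn k hk
  refine ⟨summable_inv_mul_totient.of_nonneg_of_le (fun _ => abs_nonneg _) hterm, fun y hy => ?_⟩
  have htail : Summable fun k : ℕ => if y < (k : ℝ) then ((k : ℝ) * φ k)⁻¹ else 0 :=
    summable_inv_mul_totient.of_nonneg_of_le (fun k => by positivity)
      fun k => by split_ifs; exacts [le_rfl, by positivity]
  rw [← Real.norm_eq_abs]
  refine (tsum_of_norm_bounded htail.hasSum fun k => ?_).trans (htail.tsum_le_of_sum_le fun S => ?_)
  · split_ifs
    exacts [hterm k, by simp]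
  · rw [← sum_filter]
    exact sum_filter_inv_mul_totient_le (by linarith) S
end

section
/- For x ≥ 2, one has x·Li(x) − ∫₂^x Li(t) dt = Li(x²) + O(1), where Li(u) = ∫₂^u dt/log t. -/
/-!
Integrating by parts, `x Li x - ∫₂ˣ Li = ∫₂ˣ t / log t`, while the substitution `t = u²` gives
`Li (x²) = ∫_{√2}^x u / log u`. The difference is therefore exactly the constant
`∫₂^{√2} t / log t`.
-/

open intervalIntegral MeasureTheory

noncomputable def Li (u : ℝ) : ℝ := ∫ t in (2 : ℝ)..u, 1 / Real.log t

open Set Real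

lemma continuousOn_one_div_log : ContinuousOn (fun t : ℝ => 1 / log t) (Ioi 1) := fun _ ht =>
  (continuousAt_const.div (continuousAt_log (by linarith [mem_Ioi.mp ht]))
    (log_pos ht).ne').continuousWithinAt

lemma uIcc_subset_Ioi_of_lt {a b c : ℝ} (ha : c < a) (hb : c < b) : uIcc a b ⊆ Ioi c :=
  fun _ ht => lt_of_lt_of_le (lt_min ha hb) ht.1

lemma intervalIntegrable_one_div_log {a b : ℝ} (ha : 1 < a) (hb : 1 < b) :
    IntervalIntegrable (fun t : ℝ => 1 / log t) volume a b :=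
  (continuousOn_one_div_log.mono (uIcc_subset_Ioi_of_lt ha hb)).intervalIntegrable

lemma intervalIntegrable_div_log {a b : ℝ} (ha : 1 < a) (hb : 1 < b) :
    IntervalIntegrable (fun t : ℝ => t / log t) volume a b := by
  refine ContinuousOn.intervalIntegrable (continuousOn_id.div (continuousOn_log.mono ?_) ?_)
  · exact fun t ht => (zero_lt_one.trans (uIcc_subset_Ioi_of_lt ha hb ht)).ne'
  · exact fun t ht => (log_pos (uIcc_subset_Ioi_of_lt ha hb ht)).ne'

lemma hasDerivAt_Li {t : ℝ} (ht : 1 < t) : HasDerivAt Li (1 / log t) t :=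
  integral_hasDerivAt_right (intervalIntegrable_one_div_log one_lt_two ht)
    (continuousOn_one_div_log.stronglyMeasurableAtFilter isOpen_Ioi t ht)
    (continuousOn_one_div_log.continuousAt (isOpen_Ioi.mem_nhds ht))

lemma mul_Li_sub_integral_Li {x : ℝ} (hx : 1 < x) :
    x * Li x - ∫ t in (2 : ℝ)..x, Li t = ∫ t in (2 : ℝ)..x, t / log t := by
  have hparts := integral_mul_deriv_eq_deriv_mul (a := 2) (b := x)
    (u := id) (u' := fun _ => 1) (v := Li) (v' := fun t => 1 / log t)
    (fun t _ => hasDerivAt_id t)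
    (fun t ht => hasDerivAt_Li (uIcc_subset_Ioi_of_lt one_lt_two hx ht))
    intervalIntegrable_const (intervalIntegrable_one_div_log one_lt_two hx)
  have hLi_two : Li 2 = 0 := integral_same
  simp only [id, one_mul, mul_one_div, hLi_two, mul_zero, sub_zero] at hparts
  exact hparts.symm

lemma integral_one_div_log_sq {a b : ℝ} (ha : 1 < a) (hb : 1 < b) :
    ∫ t in a ^ 2..b ^ 2, 1 / log t = ∫ u in a..b, u / log u := by
  have hsub := integral_deriv_smul_comp' (a := a) (b := b) (g := fun t => 1 / log t)
    (f' := fun u => 2 * u) (f := fun u => u ^ 2)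
    (fun u _ => by simpa [mul_comm] using hasDerivAt_pow 2 u)
    (continuous_const.mul continuous_id).continuousOn
    (continuousOn_one_div_log.mono (by
      rintro _ ⟨u, hu, rfl⟩
      exact one_lt_pow₀ (mem_Ioi.mp (uIcc_subset_Ioi_of_lt ha hb hu)) two_ne_zero))
  rw [← hsub]
  refine integral_congr fun u hu => ?_
  have hlog : log u ≠ 0 := (log_pos (uIcc_subset_Ioi_of_lt ha hb hu)).ne'
  simp only [Function.comp, smul_eq_mul, log_pow]
  field_simp
  ring

lemma Li_sq {x : ℝ} (hx : 1 < x) : Li (x ^ 2) = ∫ u in √2..x, u / log u := by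
  rw [← integral_one_div_log_sq one_lt_sqrt_two hx, sq_sqrt zero_le_two, Li]

lemma mul_Li_sub_integral_Li_sub_Li_sq {x : ℝ} (hx : 1 < x) :
    (x * Li x - ∫ t in (2 : ℝ)..x, Li t) - Li (x ^ 2) = ∫ t in (2 : ℝ)..√2, t / log t := by
  rw [mul_Li_sub_integral_Li hx, Li_sq hx,
    ← integral_add_adjacent_intervals (intervalIntegrable_div_log one_lt_sqrt_two one_lt_two)
      (intervalIntegrable_div_log one_lt_two hx),
    integral_symm √2 2]
  ring

theorem Li_partial_summation_identity :
    ∃ c : ℝ, ∀ x : ℝ, 2 ≤ x →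
      |(x * Li x - ∫ t in (2 : ℝ)..x, Li t) - Li (x ^ 2)| ≤ c :=
  ⟨|∫ t in (2 : ℝ)..√2, t / log t|, fun _ hx =>
    (mul_Li_sub_integral_Li_sub_Li_sq (one_lt_two.trans_le hx)).symm ▸ le_rfl⟩
end
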